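/- Let V = {v_1 ≥ v_2 ≥ ... ≥ v_N} be a multiset of nonnegative values with k = argmax_i i·v_i and static monopoly price p_V = v_k. Suppose V' is obtained from V by replacing a single value v_j, with v_j > v_k, by a larger value v' ≥ v_j, and re-sorting. Then the static monopoly price of V' is at least v_k. -/

import Mathlib

private lemma oi_cons_self {x : ℝ} {xs : List ℝ} (h : List.Pairwise (· ≥ ·) (x :: xs)) :
    List.orderedInsert (· ≥ ·) x xs = x :: xs := by
  cases xs with
  | nil => rfl
  | cons y ys =>
    have hxy : x ≥ y := List.rel_of_pairwise_cons h (by simp : y ∈ y :: ys)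
    simp [List.orderedInsert, hxy]

private lemma oi_key : ∀ (t : List ℝ), t.Pairwise (· ≥ ·) → ∀ a b : ℝ, a ≤ b → ∀ i : ℕ,
    (List.orderedInsert (· ≥ ·) a t).getD i 0 ≤ (List.orderedInsert (· ≥ ·) b t).getD i 0 ∧
    ((List.orderedInsert (· ≥ ·) a t).getD i 0 ≠ (List.orderedInsert (· ≥ ·) b t).getD i 0 →
      a ≤ (List.orderedInsert (· ≥ ·) a t).getD i 0)
  | [], _, a, b, hab, i => by
    cases i with
    | zero => exact ⟨hab, fun _ => le_refl a⟩
    | succ n => simp [List.orderedInsert]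
  | x :: xs, ht, a, b, hab, i => by
    by_cases hax : a ≥ x
    · have hbx : b ≥ x := le_trans hax hab
      rw [List.orderedInsert_cons_of_le _ _ hax, List.orderedInsert_cons_of_le _ _ hbx]
      cases i with
      | zero => exact ⟨hab, fun _ => le_refl a⟩
      | succ n => exact ⟨le_refl _, fun h => absurd rfl h⟩
    · push_neg at hax
      have hoa : List.orderedInsert (· ≥ ·) a (x :: xs)
          = x :: List.orderedInsert (· ≥ ·) a xs := by
        simp [List.orderedInsert, not_le.2 hax]
      by_cases hbx : b ≥ x
      · rw [hoa, List.orderedInsert_cons_of_le _ _ hbx]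
        cases i with
        | zero =>
          simp only [List.getD_cons_zero]
          exact ⟨hbx, fun _ => le_of_lt hax⟩
        | succ n =>
          have hxeq : (x :: xs : List ℝ) = List.orderedInsert (· ≥ ·) x xs :=
            (oi_cons_self ht).symm
          simp only [List.getD_cons_succ]
          rw [show ((x :: xs : List ℝ).getD n 0) = (List.orderedInsert (· ≥ ·) x xs).getD n 0
            from by rw [← hxeq]]
          exact oi_key xs ht.of_cons a x (le_of_lt hax) n
      · push_neg at hbx
        have hob : List.orderedInsert (· ≥ ·) b (x :: xs)
            = x :: List.orderedInsert (· ≥ ·) b xs := by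
          simp [List.orderedInsert, not_le.2 hbx]
        rw [hoa, hob]
        cases i with
        | zero => exact ⟨le_refl _, fun h => absurd rfl h⟩
        | succ n =>
          simp only [List.getD_cons_succ]
          exact oi_key xs ht.of_cons a b hab n

private lemma sort_cons_eq (a : ℝ) (s : Multiset ℝ) :
    (a ::ₘ s).sort (· ≥ ·) = List.orderedInsert (· ≥ ·) a (s.sort (· ≥ ·)) := by
  have h1 : List.Perm (List.orderedInsert (· ≥ ·) a (s.sort (· ≥ ·))) (a :: s.sort (· ≥ ·)) :=
    List.perm_orderedInsert _ a _
  have hperm : List.Perm ((a ::ₘ s).sort (· ≥ ·))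
      (List.orderedInsert (· ≥ ·) a (s.sort (· ≥ ·))) := by
    apply Multiset.coe_eq_coe.mp
    rw [Multiset.sort_eq, Multiset.coe_eq_coe.mpr h1, ← Multiset.cons_coe, Multiset.sort_eq]
  exact hperm.eq_of_pairwise' (Multiset.pairwise_sort _ _)
    ((Multiset.pairwise_sort s (· ≥ ·)).orderedInsert a _)

private lemma sorted_getD_mono {L : List ℝ} (hs : L.Pairwise (· ≥ ·)) {i j : ℕ}
    (hij : i ≤ j) (hj : j < L.length) : L.getD j 0 ≤ L.getD i 0 := by
  rw [List.getD_eq_getElem _ _ hj, List.getD_eq_getElem _ _ (lt_of_le_of_lt hij hj)]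
  rcases eq_or_lt_of_le hij with rfl | hlt
  · exact le_refl _
  · exact List.pairwise_iff_getElem.mp hs i j _ hj hlt

private lemma indexOf_reverse_range {n m : ℕ} (hm : m < n) :
    ((List.range n).reverse).idxOf m = n - 1 - m := by
  have hnd : ((List.range n).reverse).Nodup := List.nodup_reverse.mpr List.nodup_range
  have hlen : ((List.range n).reverse).length = n := by simp
  have hlt : n - 1 - m < ((List.range n).reverse).length := by omega
  have hget : ((List.range n).reverse)[n - 1 - m] = m := by
    rw [List.getElem_reverse]
    simp only [List.length_range, List.getElem_range]
    omega
  have := hnd.idxOf_getElem (n - 1 - m) hlt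
  rw [hget] at this
  exact this

/-- Static monopoly price of a finite multiset of valuations: sort the values in
non-increasing order as `u 1 ≥ u 2 ≥ ...` and return `u k` where `k` is the largest
index maximizing the revenue `i * u i`. -/
noncomputable def smp (s : Multiset ℝ) : ℝ :=
  let l := s.sort (· ≥ ·)
  l.getD (((List.range l.length).reverse.argmax
    (fun i : ℕ => ((i : ℝ) + 1) * l.getD i 0)).getD 0) 0

/- STATEMENT 5 (Claim 6.2, second case): If in a multiset V of nonnegative values we
replace one value v_j, with v_j > smp V, by a larger value v' ≥ v_j, the static
monopoly price does not decrease. -/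
theorem smp_replace_by_larger
    (V₀ : Multiset ℝ) (vj v' : ℝ)
    (h0 : ∀ x ∈ V₀, (0 : ℝ) ≤ x) (hvj : 0 ≤ vj)
    (hgt : smp (vj ::ₘ V₀) < vj) (hv' : vj ≤ v') :
    smp (vj ::ₘ V₀) ≤ smp (v' ::ₘ V₀) := by
  classical
  set l : List ℝ := (vj ::ₘ V₀).sort (· ≥ ·) with hldef
  set l' : List ℝ := (v' ::ₘ V₀).sort (· ≥ ·) with hl'def
  set N : ℕ := Multiset.card V₀ + 1 with hN
  have hllen : l.length = N := by simp [hldef, Multiset.length_sort, hN]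
  have hl'len : l'.length = N := by simp [hl'def, Multiset.length_sort, hN]
  set f : ℕ → ℝ := fun i : ℕ => ((i : ℝ) + 1) * l.getD i 0 with hf
  set g : ℕ → ℝ := fun i : ℕ => ((i : ℝ) + 1) * l'.getD i 0 with hg
  set k : ℕ := (((List.range l.length).reverse.argmax f).getD 0) with hk
  set k' : ℕ := (((List.range l'.length).reverse.argmax g).getD 0) with hk'
  have hsmp : smp (vj ::ₘ V₀) = l.getD k 0 := rfl
  have hsmp' : smp (v' ::ₘ V₀) = l'.getD k' 0 := rfl
  -- key pointwise facts
  have hkey : ∀ i : ℕ, l.getD i 0 ≤ l'.getD i 0 ∧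
      (l.getD i 0 ≠ l'.getD i 0 → vj ≤ l.getD i 0) := by
    intro i
    rw [hldef, hl'def, sort_cons_eq, sort_cons_eq]
    exact oi_key _ (Multiset.pairwise_sort _ _) _ _ hv' i
  -- argmax facts
  obtain ⟨m, hm⟩ : ∃ m, (List.range l.length).reverse.argmax f = some m := by
    cases h : (List.range l.length).reverse.argmax f with
    | none =>
      exfalso
      have := List.argmax_eq_none.mp h
      rw [List.reverse_eq_nil_iff, List.range_eq_nil, hllen] at this
      omega
    | some m => exact ⟨m, rfl⟩
  obtain ⟨m', hm'⟩ : ∃ m', (List.range l'.length).reverse.argmax g = some m' := by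
    cases h : (List.range l'.length).reverse.argmax g with
    | none =>
      exfalso
      have := List.argmax_eq_none.mp h
      rw [List.reverse_eq_nil_iff, List.range_eq_nil, hl'len] at this
      omega
    | some m' => exact ⟨m', rfl⟩
  have hkm : k = m := by rw [hk, hm]; rfl
  have hkm' : k' = m' := by rw [hk', hm']; rfl
  have hkN : k < N := by
    have := List.argmax_mem hm
    rw [List.mem_reverse, List.mem_range, hllen] at this
    omega
  have hk'N : k' < N := by
    have := List.argmax_mem hm'
    rw [List.mem_reverse, List.mem_range, hl'len] at this
    omega
  have hk_max : ∀ a : ℕ, a < N → f a ≤ f k := by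
    intro a ha
    rw [hkm]
    exact List.le_of_mem_argmax (a := a) (by rw [List.mem_reverse, List.mem_range, hllen]; omega) hm
  have hk'_max : ∀ a : ℕ, a < N → g a ≤ g k' := by
    intro a ha
    rw [hkm']
    exact List.le_of_mem_argmax (a := a) (by rw [List.mem_reverse, List.mem_range, hl'len]; omega) hm'
  have hgtk : l.getD k 0 < vj := by rw [hsmp] at hgt; exact hgt
  have hlk_eq : l'.getD k 0 = l.getD k 0 := by
    by_contra h
    exact absurd ((hkey k).2 (fun he => h he.symm)) (not_le.mpr hgtk)
  rw [hsmp, hsmp']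
  rcases le_or_gt k' k with hle | hlt
  · calc l.getD k 0 = l'.getD k 0 := hlk_eq.symm
      _ ≤ l'.getD k' 0 := sorted_getD_mono (Multiset.pairwise_sort _ _) hle
        (by rw [← hl'def]; omega)
  · exfalso
    -- k < k' : derive contradiction
    have hlk' : l.getD k' 0 ≤ l.getD k 0 :=
      sorted_getD_mono (Multiset.pairwise_sort _ _) (le_of_lt hlt) (by rw [← hldef]; omega)
    have hlk'_eq : l'.getD k' 0 = l.getD k' 0 := by
      by_contra h
      have := (hkey k').2 (fun he => h he.symm)
      linarith
    have hgk' : g k' = f k' := by rw [hg, hf]; simp only [hlk'_eq]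
    have hgk : g k = f k := by rw [hg, hf]; simp only [hlk_eq]
    have h1 : f k' ≤ f k := hk_max k' hk'N
    have h2 : f k ≤ f k' := by
      have := hk'_max k hkN
      rw [hgk, hgk'] at this
      exact this
    -- f k ≤ f k' so index condition forces k' ≤ k
    have hidx : ((List.range l.length).reverse).idxOf m ≤
        ((List.range l.length).reverse).idxOf k' :=
      List.index_of_argmax (a := k') hm
        (by rw [List.mem_reverse, List.mem_range, hllen]; omega)
        (by rw [← hkm]; exact h2)
    rw [← hkm, hllen, indexOf_reverse_range (by omega), indexOf_reverse_range (by omega)] at hidx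
    omega
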